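/- Let ∗ be a finite character star-operation on a domain D. If A and B are both P-∗-almost super-homogeneous ideals of D (for the same maximal ∗-ideal P), then there exists a positive integer n such that B^n ⊆ (A^n)_∗ or A^n ⊆ (B^n)_∗. -/

import Mathlib

open FractionalIdeal

variable (D : Type*) (K : Type*) [CommRing D] [IsDomain D] [Field K] [Algebra D K]
  [IsFractionRing D K]

/-- A finite character star-operation on the integral domain `D`, acting on the
nonzero fractional ideals of `D` inside its quotient field `K`. -/
structure StarOperation where
  star : FractionalIdeal (nonZeroDivisors D) K → FractionalIdeal (nonZeroDivisors D) K
  star_principal : ∀ x : K, x ≠ 0 →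
    star (spanSingleton (nonZeroDivisors D) x) = spanSingleton (nonZeroDivisors D) x
  star_smul : ∀ (x : K) (A : FractionalIdeal (nonZeroDivisors D) K), x ≠ 0 → A ≠ 0 →
    star (spanSingleton (nonZeroDivisors D) x * A) = spanSingleton (nonZeroDivisors D) x * star A
  le_star : ∀ A, A ≠ 0 → A ≤ star A
  star_mono : ∀ A B, A ≠ 0 → B ≠ 0 → A ≤ B → star A ≤ star B
  star_star : ∀ A, A ≠ 0 → star (star A) = star A
  finite_character : ∀ A, A ≠ 0 → ∀ x ∈ star A,
    ∃ B : FractionalIdeal (nonZeroDivisors D) K,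
      B ≠ 0 ∧ B ≤ A ∧ (B : Submodule D K).FG ∧ x ∈ star B

/-- A prime ideal of height one: a nonzero prime with no nonzero prime strictly below it. -/
def HeightOnePrime (P : Ideal D) : Prop :=
  P.IsPrime ∧ P ≠ ⊥ ∧ ∀ Q : Ideal D, Q.IsPrime → Q < P → Q = ⊥

/-- Membership of `x : K` in the localization `D_P` viewed inside `K`. -/
def MemLocAt (P : Ideal D) (x : K) : Prop :=
  ∃ a t : D, t ∉ P ∧ x * algebraMap D K t = algebraMap D K a

/-- An almost valuation ring: for nonzero `a, b` some power `a^n` divides `b^n` or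
conversely. -/
def AVRing (R : Type*) [CommRing R] : Prop :=
  ∀ a b : R, a ≠ 0 → b ≠ 0 → ∃ n : ℕ, 0 < n ∧ (a ^ n ∣ b ^ n ∨ b ^ n ∣ a ^ n)

/-- The `v`-operation `A ↦ (A⁻¹)⁻¹` on fractional ideals. -/
noncomputable def vOp (A : FractionalIdeal (nonZeroDivisors D) K) : FractionalIdeal (nonZeroDivisors D) K :=
  (A⁻¹)⁻¹

/-- An integral ideal is a `t`-ideal if it contains `B_v` for every nonzero finitely
generated subideal `B`. -/
def IsTIdeal (I : Ideal D) : Prop :=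
  ∀ B : Ideal D, B ≠ ⊥ → B.FG → B ≤ I →
    vOp D K (B : FractionalIdeal (nonZeroDivisors D) K) ≤ (I : FractionalIdeal (nonZeroDivisors D) K)

/-- Maximal `t`-ideals. -/
def IsTMax (P : Ideal D) : Prop :=
  P ≠ ⊥ ∧ P ≠ ⊤ ∧ IsTIdeal D K P ∧
    ∀ J : Ideal D, J ≠ ⊤ → IsTIdeal D K J → P ≤ J → J = P

/-- An integral ideal is a `w`-ideal if it contains every `x ∈ K` with `xJ ⊆ I` for
some finitely generated ideal `J` with `J⁻¹ = D`. -/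
def IsWIdeal (I : Ideal D) : Prop :=
  ∀ x : K, (∃ J : Ideal D, J.FG ∧ ((J : FractionalIdeal (nonZeroDivisors D) K))⁻¹ = 1 ∧
      spanSingleton (nonZeroDivisors D) x * (J : FractionalIdeal (nonZeroDivisors D) K) ≤
        (I : FractionalIdeal (nonZeroDivisors D) K)) →
    x ∈ (I : FractionalIdeal (nonZeroDivisors D) K)

/-- Maximal `w`-ideals. -/
def IsWMax (P : Ideal D) : Prop :=
  P ≠ ⊥ ∧ P ≠ ⊤ ∧ IsWIdeal D K P ∧
    ∀ J : Ideal D, J ≠ ⊤ → IsWIdeal D K J → P ≤ J → J = P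

/-- `P ∈ Ass(K/D)`: `P` is a prime minimal over a conductor ideal `(aD : bD)`. -/
def InAssKD (P : Ideal D) : Prop :=
  P.IsPrime ∧ ∃ a b : D, a ≠ 0 ∧ b ≠ 0 ∧
    (Ideal.span {a}).colon (Ideal.span {b}) ≤ P ∧
    ∀ Q : Ideal D, Q.IsPrime → (Ideal.span {a}).colon (Ideal.span {b}) ≤ Q → Q ≤ P → Q = P

/-- An AGCD (almost GCD) domain: for all nonzero `a, b` there is `n ≥ 1` with
`(aⁿ, bⁿ)_v` principal. -/
def IsAGCDDomain : Prop :=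
  ∀ a b : D, a ≠ 0 → b ≠ 0 → ∃ n : ℕ, 0 < n ∧ ∃ d : D,
    vOp D K ((Ideal.span {a ^ n, b ^ n} : Ideal D) : FractionalIdeal (nonZeroDivisors D) K) =
      spanSingleton (nonZeroDivisors D) (algebraMap D K d)

/-- `D_P` is an almost valuation domain, for `P` a prime of `D`. -/
def AVAtPrime {D : Type*} [CommRing D] (P : Ideal D) (hP : P.IsPrime) : Prop :=
  AVRing (Localization (@Ideal.primeCompl D _ P hP))

namespace StarOperation

variable {D K}
variable (s : StarOperation D K)

/-- The star closure of an integral ideal, as an integral ideal. -/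
def starI (I : Ideal D) : Ideal D :=
  (s.star (I : FractionalIdeal (nonZeroDivisors D) K) : Submodule D K).comap
    (Algebra.linearMap D K)

/-- An integral `∗`-ideal. -/
def IsStarIdeal (I : Ideal D) : Prop :=
  s.star (I : FractionalIdeal (nonZeroDivisors D) K) = (I : FractionalIdeal (nonZeroDivisors D) K)

/-- A maximal `∗`-ideal: maximal among proper integral `∗`-ideals (such ideals are prime). -/
def IsMaxStarIdeal (P : Ideal D) : Prop :=
  P ≠ ⊥ ∧ P ≠ ⊤ ∧ P.IsPrime ∧ s.IsStarIdeal P ∧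
    ∀ J : Ideal D, J ≠ ⊤ → s.IsStarIdeal J → P ≤ J → J = P

/-- `∗`-invertibility of a fractional ideal. -/
def IsStarInvertible (A : FractionalIdeal (nonZeroDivisors D) K) : Prop :=
  s.star (A * A⁻¹) = 1

/-- `∗`-invertibility of an integral ideal. -/
def IsStarInvertibleI (I : Ideal D) : Prop :=
  s.IsStarInvertible (I : FractionalIdeal (nonZeroDivisors D) K)

/-- A `P`-`∗`-homogeneous ideal: nonzero, finitely generated, contained in the maximal
`∗`-ideal `P` and in no other maximal `∗`-ideal. -/
def IsHomogeneous (P I : Ideal D) : Prop :=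
  I ≠ ⊥ ∧ I.FG ∧ s.IsMaxStarIdeal P ∧ I ≤ P ∧
    ∀ Q : Ideal D, s.IsMaxStarIdeal Q → I ≤ Q → Q = P

/-- A type 1 `∗`-homogeneous ideal: `M(A) = √(A_∗)`. -/
def IsType1 (P I : Ideal D) : Prop := P = (s.starI I).radical

/-- A type 2 `∗`-homogeneous ideal: `A_∗ = (M(A)ⁿ)_∗` for some `n ≥ 1`. -/
def IsType2 (P I : Ideal D) : Prop :=
  ∃ n : ℕ, 0 < n ∧
    s.star (I : FractionalIdeal (nonZeroDivisors D) K) =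
      s.star ((P ^ n : Ideal D) : FractionalIdeal (nonZeroDivisors D) K)

/-- A `P`-`∗`-almost super-homogeneous ideal. -/
def IsAlmostSuperHomogeneous (P I : Ideal D) : Prop :=
  s.IsStarInvertibleI I ∧ s.IsHomogeneous P I ∧
    ∀ (k : ℕ) (b : Fin k → D), (∀ i, b i ∈ P) →
      (∃ r : ℕ, 0 < r ∧ ((I ^ r : Ideal D) : FractionalIdeal (nonZeroDivisors D) K) ≤
        s.star ((Ideal.span (Set.range b) : Ideal D) : FractionalIdeal (nonZeroDivisors D) K)) →
      ∃ n : ℕ, 0 < n ∧ s.IsStarInvertibleI (Ideal.span (Set.range fun i => b i ^ n))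

/-- A `∗`-super-homogeneous ideal: every `∗`-homogeneous ideal containing it is
`∗`-invertible. -/
def IsSuperHomogeneous (P I : Ideal D) : Prop :=
  s.IsHomogeneous P I ∧
    ∀ B Q : Ideal D, s.IsHomogeneous Q B → I ≤ B → s.IsStarInvertibleI B

/-- A `P`-`∗`-afg-homogeneous (almost factorial general homogeneous) ideal. -/
def IsAfgHomogeneous (P I : Ideal D) : Prop :=
  s.IsStarInvertibleI I ∧ s.IsHomogeneous P I ∧
    ∀ (k : ℕ) (b : Fin k → D), (∀ i, b i ∈ P) →
      (∃ r : ℕ, 0 < r ∧ ((I ^ r : Ideal D) : FractionalIdeal (nonZeroDivisors D) K) ≤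
        s.star ((Ideal.span (Set.range b) : Ideal D) : FractionalIdeal (nonZeroDivisors D) K)) →
      ∃ n : ℕ, 0 < n ∧ ∃ d : D,
        s.star ((Ideal.span (Set.range fun i => b i ^ n) : Ideal D) :
            FractionalIdeal (nonZeroDivisors D) K) =
          spanSingleton (nonZeroDivisors D) (algebraMap D K d)

/-- A `∗`-af-homogeneous ideal: every `∗`-homogeneous ideal containing it has a power
whose `∗`-closure is principal. -/
def IsAfHomogeneous (P I : Ideal D) : Prop :=
  s.IsHomogeneous P I ∧
    ∀ B Q : Ideal D, s.IsHomogeneous Q B → I ≤ B →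
      ∃ n : ℕ, 0 < n ∧ ∃ d : D,
        s.star ((B ^ n : Ideal D) : FractionalIdeal (nonZeroDivisors D) K) =
          spanSingleton (nonZeroDivisors D) (algebraMap D K d)

/-- `D` is a `∗`-SH domain with respect to a property of ideals: every nonzero proper
principal ideal is a `∗`-product of ideals with the given property. -/
def IsSHWith (prop : Ideal D → Prop) : Prop :=
  ∀ x : D, x ≠ 0 → ¬IsUnit x →
    ∃ (k : ℕ) (A : Fin k → Ideal D), (∀ i, prop (A i)) ∧
      s.star ((∏ i, A i : Ideal D) : FractionalIdeal (nonZeroDivisors D) K) =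
        ((Ideal.span {x} : Ideal D) : FractionalIdeal (nonZeroDivisors D) K)

/-- A `∗`-almost super-SH domain. -/
def IsAlmostSuperSH : Prop :=
  s.IsSHWith fun I => ∃ P, s.IsAlmostSuperHomogeneous P I

/-- Finite character: every nonzero nonunit lies in only finitely many maximal
`∗`-ideals. -/
def FiniteCharacterDom : Prop :=
  ∀ x : D, x ≠ 0 → ¬IsUnit x → {P : Ideal D | s.IsMaxStarIdeal P ∧ x ∈ P}.Finite

/-- Independence: no two distinct maximal `∗`-ideals contain a common nonzero prime. -/
def IndependentDom : Prop :=
  ∀ P Q : Ideal D, s.IsMaxStarIdeal P → s.IsMaxStarIdeal Q → P ≠ Q →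
    ∀ L : Ideal D, L.IsPrime → L ≠ ⊥ → ¬(L ≤ P ∧ L ≤ Q)

/-- A `∗`-h-local domain. -/
def IsHLocal : Prop := s.FiniteCharacterDom ∧ s.IndependentDom

/-- A `∗`-almost independent ring of Krull type. -/
def IsAlmostIRKT : Prop :=
  s.IsHLocal ∧ ∀ (P : Ideal D) (h : s.IsMaxStarIdeal P), AVAtPrime P h.2.2.1

/-- A `∗`-almost generalized Krull domain. -/
def IsAGKD : Prop :=
  (∀ x : K, (∀ P : Ideal D, HeightOnePrime D P → MemLocAt D K P x) →
      ∃ d : D, algebraMap D K d = x) ∧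
  (∀ x : D, x ≠ 0 → ¬IsUnit x → {P : Ideal D | HeightOnePrime D P ∧ x ∈ P}.Finite) ∧
  (∀ P : Ideal D, s.IsMaxStarIdeal P ↔ HeightOnePrime D P) ∧
  (∀ (P : Ideal D) (h : s.IsMaxStarIdeal P), AVAtPrime P h.2.2.1)

/-- A `∗`-Krull domain: `∗`-h-local, `∗-Max(D) = X⁽¹⁾(D)`, and `D_P` is a DVR for each
maximal `∗`-ideal `P`. -/
def IsStarKrull : Prop :=
  s.IsHLocal ∧ (∀ P : Ideal D, s.IsMaxStarIdeal P ↔ HeightOnePrime D P) ∧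
    ∀ (P : Ideal D) (h : s.IsMaxStarIdeal P),
      @IsDiscreteValuationRing (Localization (@Ideal.primeCompl D _ P h.2.2.1)) _
        (IsLocalization.isDomain_localization (@Ideal.primeCompl_le_nonZeroDivisors D _ _ P h.2.2.1))

/-- A `∗`-almost Bézout domain. -/
def IsAlmostBezout : Prop :=
  ∀ a b : D, a ≠ 0 → b ≠ 0 → ∃ n : ℕ, 0 < n ∧ ∃ d : D,
    s.star ((Ideal.span {a ^ n, b ^ n} : Ideal D) : FractionalIdeal (nonZeroDivisors D) K) =
      spanSingleton (nonZeroDivisors D) (algebraMap D K d)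

/-- The `∗`-class group `Cl_∗(D)` is torsion: every `∗`-invertible fractional ideal has a
power whose `∗`-closure is principal. -/
def HasTorsionClassGroup : Prop :=
  ∀ A : FractionalIdeal (nonZeroDivisors D) K, A ≠ 0 → s.IsStarInvertible A →
    ∃ n : ℕ, 0 < n ∧ ∃ x : K, s.star (A ^ n) = spanSingleton (nonZeroDivisors D) x

end StarOperation

variable {D : Type*} {K : Type*} [CommRing D] [IsDomain D] [Field K] [Algebra D K]
  [IsFractionRing D K]

open StarOperation

/-!
Write `A = (a₁, …, a_k)` and `B = (b₁, …, b_l)`. All generators lie in `P` and `A ⊆ (A + B)_∗`,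
so almost super-homogeneity of `A` gives an `n ≥ 1` for which `C = A' + B'` is ∗-invertible,
where `A' = (a₁ⁿ, …, a_kⁿ)` and `B' = (b₁ⁿ, …, b_lⁿ)`. By pigeonhole
`A^{(k+1)n} ⊆ A' A^{kn} ⊆ A^{(k+1)n}`, and cancelling the ∗-invertible `A^{kn}` gives
`A'_∗ = (Aⁿ)_∗`; likewise `B'_∗ = (Bⁿ)_∗`.

The integral ideals `U = (A'C⁻¹)_∗` and `V = (B'C⁻¹)_∗` satisfy `(U + V)_∗ = (CC⁻¹)_∗ = D`.
If `U = D` then `C_∗ = (UC)_∗ = A'_∗`, so `B' ⊆ A'_∗`. Otherwise `U` lies in a maximal ∗-ideal `Q`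
(Zorn, using finite character), hence so does `A'_∗ = (UC)_∗`; since `A'` has the same radical
as `A`, `Q = P`. The same holds for `V`, and `U, V ⊆ P` would force `D = (U + V)_∗ ⊆ P`.
-/

theorem Fin.range_append {α : Type*} {m n : ℕ} (a : Fin m → α) (b : Fin n → α) :
    Set.range (Fin.append a b) = Set.range a ∪ Set.range b := by
  ext x
  constructor
  · rintro ⟨i, rfl⟩
    induction i using Fin.addCases <;> simp
  · rintro (⟨i, rfl⟩ | ⟨i, rfl⟩)
    · exact ⟨Fin.castAdd n i, Fin.append_left a b i⟩
    · exact ⟨Fin.natAdd m i, Fin.append_right a b i⟩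

section IdealPow

variable {R : Type*} [CommSemiring R]

open Ideal

theorem Ideal.span_range_pow_le_mul {ι : Type*} [Fintype ι] [Nonempty ι] (a : ι → R)
    {n N : ℕ} (hN : Fintype.card ι * n ≤ N) :
    span (Set.range a) ^ N ≤
      span (Set.range fun i => a i ^ n) * span (Set.range a) ^ (N - n) := by
  classical
  rw [Ideal.span, Submodule.span_pow, ← Ideal.span, span_le]
  intro x hx
  obtain ⟨f, rfl⟩ := Set.mem_pow.mp hx
  choose g hg using fun j => (f j).2
  obtain ⟨i, hi⟩ := Fintype.exists_le_card_fiber_of_mul_le_card g (by simpa using hN)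
  obtain ⟨S, hS, rfl⟩ := Finset.exists_subset_card_eq hi
  have hSi : ∏ j ∈ S, a (g j) = a i ^ S.card :=
    Finset.prod_eq_pow_card fun j hj => by rw [(Finset.mem_filter.mp (hS hj)).2]
  rw [List.prod_ofFn, ← Finset.prod_mul_prod_compl S]
  simp only [← hg, hSi]
  refine mul_mem_mul (subset_span ⟨i, rfl⟩) ?_
  have hcard : Sᶜ.card = N - S.card := by rw [Finset.card_compl, Fintype.card_fin]
  rw [← hcard, ← Finset.prod_const]
  exact prod_mem_prod fun j _ => subset_span ⟨g j, rfl⟩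

theorem Ideal.span_range_le_radical_span_range_pow {ι : Type*} (a : ι → R) (n : ℕ) :
    span (Set.range a) ≤ (span (Set.range fun i => a i ^ n)).radical :=
  span_le.mpr fun _ ⟨i, hi⟩ => ⟨n, hi ▸ subset_span ⟨i, rfl⟩⟩

theorem Ideal.span_range_pow_ne_bot [NoZeroDivisors R] {ι : Type*} {a : ι → R}
    (ha : span (Set.range a) ≠ ⊥) (n : ℕ) : span (Set.range fun i => a i ^ n) ≠ ⊥ := by
  simp only [ne_eq, span_eq_bot, Set.forall_mem_range, not_forall] at ha ⊢
  obtain ⟨i, hi⟩ := ha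
  exact ⟨i, pow_ne_zero n hi⟩

end IdealPow

open scoped nonZeroDivisors

section

variable {R L : Type*} [CommRing R] [Field L] [Algebra R L]

instance FractionalIdeal.noZeroDivisors : NoZeroDivisors (FractionalIdeal R⁰ L) where
  eq_zero_or_eq_zero_of_mul_eq_zero {I J} hIJ := by
    by_contra! h
    obtain ⟨x, hx, hx0⟩ :=
      Submodule.exists_mem_ne_zero_of_ne_bot (coeToSubmodule_ne_bot.mpr h.1)
    obtain ⟨y, hy, hy0⟩ :=
      Submodule.exists_mem_ne_zero_of_ne_bot (coeToSubmodule_ne_bot.mpr h.2)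
    have hxy : x * y ∈ I * J := mul_mem_mul hx hy
    rw [hIJ, mem_zero_iff] at hxy
    exact mul_ne_zero hx0 hy0 hxy

variable [IsFractionRing R L]

theorem FractionalIdeal.inv_ne_zero [IsDomain R] {I : FractionalIdeal R⁰ L} (hI : I ≠ 0) :
    I⁻¹ ≠ 0 :=
  right_ne_zero_of_mul (bot_lt_mul_inv hI).ne'

namespace StarOperation

variable (s : StarOperation R L) {X Y Z : FractionalIdeal R⁰ L}

theorem star_ne_zero (hX : X ≠ 0) : s.star X ≠ 0 :=
  ne_bot_of_le_ne_bot hX (s.le_star X hX)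

theorem star_one : s.star 1 = 1 := by
  simpa using s.star_principal 1 one_ne_zero

theorem le_star_iff_star_le_star (hX : X ≠ 0) (hY : Y ≠ 0) :
    Y ≤ s.star X ↔ s.star Y ≤ s.star X := by
  refine ⟨fun h => ?_, fun h => (s.le_star Y hY).trans h⟩
  simpa [s.star_star X hX] using s.star_mono Y _ hY (s.star_ne_zero hX) h

theorem star_mul_le (hX : X ≠ 0) (hY : Y ≠ 0) : s.star X * Y ≤ s.star (X * Y) := by
  refine FractionalIdeal.mul_le.mpr fun x hx y hy => ?_
  rcases eq_or_ne y 0 with rfl | hy0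
  · simpa using (s.star (X * Y)).zero_mem
  have hyX : spanSingleton R⁰ y * X ≤ X * Y := by
    rw [mul_comm]
    exact mul_le_mul_right (spanSingleton_le_iff_mem.mpr hy) X
  have hxy : x * y ∈ s.star (spanSingleton R⁰ y * X) := by
    rw [s.star_smul y X hy0 hX, mul_comm x]
    exact mul_mem_mul (mem_spanSingleton_self R⁰ y) hx
  exact s.star_mono _ _ (mul_ne_zero (spanSingleton_ne_zero_iff.mpr hy0) hX) (mul_ne_zero hX hY)
    hyX hxy

theorem star_star_mul (hX : X ≠ 0) (hY : Y ≠ 0) : s.star (s.star X * Y) = s.star (X * Y) := by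
  have hXY : X * Y ≠ 0 := mul_ne_zero hX hY
  refine le_antisymm ?_ (s.star_mono _ _ hXY (mul_ne_zero (s.star_ne_zero hX) hY)
    (mul_le_mul_left (s.le_star X hX) Y))
  simpa [s.star_star _ hXY] using s.star_mono _ _ (mul_ne_zero (s.star_ne_zero hX) hY)
    (s.star_ne_zero hXY) (s.star_mul_le hX hY)

theorem star_mul_star (hX : X ≠ 0) (hY : Y ≠ 0) : s.star (X * s.star Y) = s.star (X * Y) := by
  rw [mul_comm, s.star_star_mul hY hX, mul_comm]

theorem star_mul_star_mul_star (hX : X ≠ 0) (hY : Y ≠ 0) :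
    s.star (s.star X * s.star Y) = s.star (X * Y) := by
  rw [s.star_star_mul hX (s.star_ne_zero hY), s.star_mul_star hX hY]

open Ideal

theorem isStarIdeal_sSup {c : Set (Ideal R)} (hc : IsChain (· ≤ ·) c)
    (hstar : ∀ J ∈ c, s.IsStarIdeal J) (hc0 : sSup c ≠ ⊥) : s.IsStarIdeal (sSup c) := by
  have hne : ((sSup c : Ideal R) : FractionalIdeal R⁰ L) ≠ 0 := coeIdeal_ne_zero.mpr hc0
  refine le_antisymm (fun x hx => ?_) (s.le_star _ hne)
  obtain ⟨F, hF0, hFc, hFfg, hxF⟩ := s.finite_character _ hne x hx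
  obtain ⟨F, rfl⟩ := le_one_iff_exists_coeIdeal.mp (hFc.trans coeIdeal_le_one)
  have hcne : c.Nonempty := Set.nonempty_iff_ne_empty.mpr fun h => hc0 (by simp [h])
  obtain ⟨J, hJc, hFJ⟩ := (CompleteLattice.isCompactElement_iff_le_of_directed_sSup_le _ _).mp
    ((Submodule.fg_iff_compact _).mp ((coeIdeal_fg _ (IsFractionRing.injective R L) _).mp hFfg))
    c hcne hc.directedOn ((coeIdeal_le_coeIdeal L).mp hFc)
  have hFJ' : (F : FractionalIdeal R⁰ L) ≤ J := (coeIdeal_le_coeIdeal L).mpr hFJ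
  have hxJ := s.star_mono _ _ hF0 (ne_bot_of_le_ne_bot hF0 hFJ') hFJ' hxF
  rw [hstar J hJc] at hxJ
  exact (coeIdeal_le_coeIdeal L).mpr (le_sSup hJc) hxJ

theorem star_sup_span_singleton_eq_one {M : Ideal R}
    (hM : Maximal (fun J : Ideal R => J ≠ ⊥ ∧ J ≠ ⊤ ∧ s.IsStarIdeal J) M) {z : R}
    (hz : z ∉ M) :
    s.star ((M ⊔ span {z} : Ideal R) : FractionalIdeal R⁰ L) = 1 := by
  have hI0 : ((M ⊔ span {z} : Ideal R) : FractionalIdeal R⁰ L) ≠ 0 :=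
    coeIdeal_ne_zero.mpr (ne_bot_of_le_ne_bot hM.prop.1 le_sup_left)
  obtain ⟨J, hJ⟩ := le_one_iff_exists_coeIdeal.mp
    (s.star_one ▸ s.star_mono _ 1 hI0 one_ne_zero coeIdeal_le_one)
  have hIJ : M ⊔ span {z} ≤ J := (coeIdeal_le_coeIdeal L).mp (hJ ▸ s.le_star _ hI0)
  by_contra hJ1
  have hJ : J ≠ ⊥ ∧ J ≠ ⊤ ∧ s.IsStarIdeal J :=
    ⟨ne_bot_of_le_ne_bot hM.prop.1 (le_sup_left.trans hIJ),
      fun h => hJ1 (by rw [← hJ, h, coeIdeal_top]),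
      by rw [IsStarIdeal, hJ, s.star_star _ hI0]⟩
  exact hz (hM.eq_of_ge hJ (le_sup_left.trans hIJ) ▸
    hIJ (mem_sup_right (mem_span_singleton_self z)))

theorem isPrime_of_maximal {M : Ideal R}
    (hM : Maximal (fun J : Ideal R => J ≠ ⊥ ∧ J ≠ ⊤ ∧ s.IsStarIdeal J) M) :
    M.IsPrime := by
  refine ⟨hM.prop.2.1, fun {x y} hxy => ?_⟩
  by_contra! hxy'
  have hne : ∀ z, ((M ⊔ span {z} : Ideal R) : FractionalIdeal R⁰ L) ≠ 0 := fun z =>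
    coeIdeal_ne_zero.mpr (ne_bot_of_le_ne_bot hM.prop.1 le_sup_left)
  have hle : (M ⊔ span {x}) * (M ⊔ span {y}) ≤ M := by
    rw [Ideal.sup_mul, Ideal.mul_sup, Ideal.mul_sup, span_singleton_mul_span_singleton]
    exact sup_le (sup_le Ideal.mul_le_right Ideal.mul_le_left)
      (sup_le Ideal.mul_le_right ((span_singleton_le_iff_mem M).mpr hxy))
  have htop : ((⊤ : Ideal R) : FractionalIdeal R⁰ L) ≤ M := calc
    _ = s.star (((M ⊔ span {x} : Ideal R) : FractionalIdeal R⁰ L) *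
          (M ⊔ span {y} : Ideal R)) := by
      rw [← s.star_mul_star_mul_star (hne x) (hne y), s.star_sup_span_singleton_eq_one hM hxy'.1,
        s.star_sup_span_singleton_eq_one hM hxy'.2, one_mul, s.star_one, coeIdeal_top]
    _ ≤ s.star M := s.star_mono _ _ (mul_ne_zero (hne x) (hne y)) (coeIdeal_ne_zero.mpr hM.prop.1)
      (by rw [← coeIdeal_mul]; exact (coeIdeal_le_coeIdeal L).mpr hle)
    _ = M := hM.prop.2.2
  exact hM.prop.2.1 (top_le_iff.mp ((coeIdeal_le_coeIdeal L).mp htop))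

theorem exists_isMaxStarIdeal_le {I : Ideal R} (hI0 : I ≠ ⊥) (hI1 : I ≠ ⊤)
    (hI : s.IsStarIdeal I) : ∃ Q, s.IsMaxStarIdeal Q ∧ I ≤ Q := by
  set S := {J : Ideal R | J ≠ ⊥ ∧ J ≠ ⊤ ∧ s.IsStarIdeal J}
  have hchain : ∀ c ⊆ S, IsChain (· ≤ ·) c → ∀ J ∈ c, ∃ ub ∈ S, ∀ J' ∈ c, J' ≤ ub := by
    intro c hcS hc J hJ
    have hc0 : sSup c ≠ ⊥ := ne_bot_of_le_ne_bot (hcS hJ).1 (le_sSup hJ)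
    have hc1 : sSup c ≠ ⊤ := fun htop => by
      obtain ⟨J', hJ'c, h1⟩ := (Submodule.mem_sSup_of_directed ⟨J, hJ⟩ hc.directedOn).mp
        (htop ▸ Submodule.mem_top : (1 : R) ∈ sSup c)
      exact (hcS hJ'c).2.1 ((eq_top_iff_one J').mpr h1)
    exact ⟨sSup c, ⟨hc0, hc1, s.isStarIdeal_sSup hc (fun J' hJ' => (hcS hJ').2.2) hc0⟩,
      fun _ => le_sSup⟩
  obtain ⟨M, hIM, hM⟩ := zorn_le_nonempty₀ S hchain I ⟨hI0, hI1, hI⟩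
  exact ⟨M, ⟨hM.prop.1, hM.prop.2.1, s.isPrime_of_maximal hM, hM.prop.2.2,
    fun J hJ1 hJ hMJ => hM.eq_of_ge ⟨ne_bot_of_le_ne_bot hM.prop.1 hMJ, hJ1, hJ⟩ hMJ⟩, hIM⟩

theorem forall_isMaxStarIdeal_span_range_pow_le {P : Ideal R} {ι : Type*} {a : ι → R}
    (h : ∀ Q, s.IsMaxStarIdeal Q → span (Set.range a) ≤ Q → Q = P) (n : ℕ) :
    ∀ Q, s.IsMaxStarIdeal Q → span (Set.range fun i => a i ^ n) ≤ Q → Q = P :=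
  fun Q hQ hle =>
    h Q hQ ((span_range_le_radical_span_range_pow a n).trans (hQ.2.2.1.radical_le_iff.mpr hle))

section Domain

variable [IsDomain R]

theorem star_mul_mul_inv (hX : X ≠ 0) (hY : Y ≠ 0) (hYinv : s.IsStarInvertible Y) :
    s.star (X * Y * Y⁻¹) = s.star X := by
  rw [mul_assoc, ← s.star_mul_star hX (mul_ne_zero hY (inv_ne_zero hY)), hYinv, mul_one]

theorem star_eq_of_star_mul_eq (hX : X ≠ 0) (hY : Y ≠ 0) (hZ : Z ≠ 0)
    (hZinv : s.IsStarInvertible Z) (h : s.star (X * Z) = s.star (Y * Z)) : s.star X = s.star Y := by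
  have hZ' : Z⁻¹ ≠ 0 := inv_ne_zero hZ
  rw [← s.star_mul_mul_inv hX hZ hZinv, ← s.star_mul_mul_inv hY hZ hZinv,
    ← s.star_star_mul (mul_ne_zero hX hZ) hZ', h, s.star_star_mul (mul_ne_zero hY hZ) hZ']

theorem star_eq_of_star_mul_pow_eq (hX : X ≠ 0) (hY : Y ≠ 0) (hZ : Z ≠ 0)
    (hZinv : s.IsStarInvertible Z) :
    ∀ m : ℕ, s.star (X * Z ^ m) = s.star (Y * Z ^ m) → s.star X = s.star Y
  | 0, h => by simpa using h
  | m + 1, h => by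
    simp only [pow_succ, ← mul_assoc] at h
    exact star_eq_of_star_mul_pow_eq hX hY hZ hZinv m <|
      s.star_eq_of_star_mul_eq (mul_ne_zero hX (pow_ne_zero m hZ))
        (mul_ne_zero hY (pow_ne_zero m hZ)) hZ hZinv h

theorem le_star_or_star_mul_inv_le {P X : Ideal R} {C : FractionalIdeal R⁰ L} (hX0 : X ≠ ⊥)
    (hXC : (X : FractionalIdeal R⁰ L) ≤ C) (hC1 : C ≤ 1) (hC : s.IsStarInvertible C)
    (hXP : ∀ Q, s.IsMaxStarIdeal Q → X ≤ Q → Q = P) :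
    C ≤ s.star X ∨ s.star (X * C⁻¹) ≤ P := by
  have hX : (X : FractionalIdeal R⁰ L) ≠ 0 := coeIdeal_ne_zero.mpr hX0
  have hC0 : C ≠ 0 := ne_bot_of_le_ne_bot hX hXC
  have hXC' : (X : FractionalIdeal R⁰ L) * C⁻¹ ≠ 0 := mul_ne_zero hX (inv_ne_zero hC0)
  set W := s.star (X * C⁻¹)
  have hW0 : W ≠ 0 := s.star_ne_zero hXC'
  have hWC : s.star (W * C) = s.star X := by
    rw [s.star_star_mul hXC' hC0, mul_right_comm, s.star_mul_mul_inv hX hC0 hC]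
  by_cases hW1 : W = 1
  · left
    calc C ≤ s.star C := s.le_star C hC0
      _ = s.star X := by rw [← hWC, hW1, one_mul]
  right
  have hW : W ≤ 1 := hC ▸ s.star_mono _ _ hXC' (mul_ne_zero hC0 (inv_ne_zero hC0))
    (mul_le_mul_left hXC _)
  obtain ⟨J, hJ⟩ := le_one_iff_exists_coeIdeal.mp hW
  obtain ⟨Q, hQ, hJQ⟩ := s.exists_isMaxStarIdeal_le (I := J)
    (fun h => hW0 (by rw [← hJ, h, coeIdeal_bot]))
    (fun h => hW1 (by rw [← hJ, h, coeIdeal_top]))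
    (by rw [IsStarIdeal, hJ, s.star_star _ hXC'])
  have hWQ : W ≤ Q := hJ ▸ (coeIdeal_le_coeIdeal L).mpr hJQ
  have hXQ : (X : FractionalIdeal R⁰ L) ≤ Q := calc
    _ ≤ s.star X := s.le_star _ hX
    _ = s.star (W * C) := hWC.symm
    _ ≤ s.star W :=
      s.star_mono _ _ (mul_ne_zero hW0 hC0) hW0 (by simpa using mul_le_mul_right hC1 W)
    _ = W := s.star_star _ hXC'
    _ ≤ Q := hWQ
  rwa [← hXP Q hQ ((coeIdeal_le_coeIdeal L).mp hXQ)]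

theorem star_le_star_or_star_le_star {P A B : Ideal R} (hP : s.IsMaxStarIdeal P)
    (hA0 : A ≠ ⊥) (hB0 : B ≠ ⊥) (hAP : ∀ Q, s.IsMaxStarIdeal Q → A ≤ Q → Q = P)
    (hBP : ∀ Q, s.IsMaxStarIdeal Q → B ≤ Q → Q = P) (hAB : s.IsStarInvertibleI (A ⊔ B)) :
    s.star (B : FractionalIdeal R⁰ L) ≤ s.star A ∨
      s.star (A : FractionalIdeal R⁰ L) ≤ s.star B := by
  set C : FractionalIdeal R⁰ L := ↑(A ⊔ B)
  have hA : (A : FractionalIdeal R⁰ L) ≠ 0 := coeIdeal_ne_zero.mpr hA0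
  have hB : (B : FractionalIdeal R⁰ L) ≠ 0 := coeIdeal_ne_zero.mpr hB0
  have hAC : (A : FractionalIdeal R⁰ L) ≤ C := (coeIdeal_le_coeIdeal L).mpr le_sup_left
  have hBC : (B : FractionalIdeal R⁰ L) ≤ C := (coeIdeal_le_coeIdeal L).mpr le_sup_right
  rcases s.le_star_or_star_mul_inv_le hA0 hAC coeIdeal_le_one hAB hAP with hAC' | hAP'
  · exact Or.inl ((s.le_star_iff_star_le_star hA hB).mp (hBC.trans hAC'))
  rcases s.le_star_or_star_mul_inv_le hB0 hBC coeIdeal_le_one hAB hBP with hBC' | hBP'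
  · exact Or.inr ((s.le_star_iff_star_le_star hB hA).mp (hAC.trans hBC'))
  have hCinv : C⁻¹ ≠ 0 := inv_ne_zero (ne_bot_of_le_ne_bot hA hAC)
  have hAC0 : (A : FractionalIdeal R⁰ L) * C⁻¹ ≠ 0 := mul_ne_zero hA hCinv
  have hBC0 : (B : FractionalIdeal R⁰ L) * C⁻¹ ≠ 0 := mul_ne_zero hB hCinv
  have htop : ((⊤ : Ideal R) : FractionalIdeal R⁰ L) ≤ P := calc
    _ = s.star (C * C⁻¹) := by rw [coeIdeal_top]; exact hAB.symm
    _ = s.star (A * C⁻¹ ⊔ B * C⁻¹) := by rw [sup_eq_add, ← add_mul, ← coeIdeal_sup]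
    _ ≤ s.star (s.star (A * C⁻¹) ⊔ s.star (B * C⁻¹)) :=
      s.star_mono _ _ (ne_bot_of_le_ne_bot hAC0 le_sup_left)
        (ne_bot_of_le_ne_bot (s.star_ne_zero hAC0) le_sup_left)
        (sup_le_sup (s.le_star _ hAC0) (s.le_star _ hBC0))
    _ ≤ s.star P := s.star_mono _ _ (ne_bot_of_le_ne_bot (s.star_ne_zero hAC0) le_sup_left)
        (coeIdeal_ne_zero.mpr hP.1) (sup_le hAP' hBP')
    _ = P := hP.2.2.2.1
  exact (hP.2.1 (top_le_iff.mp ((coeIdeal_le_coeIdeal L).mp htop))).elim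

theorem star_span_range_pow {ι : Type*} [Fintype ι] {a : ι → R}
    (ha : span (Set.range a) ≠ ⊥) (hinv : s.IsStarInvertibleI (span (Set.range a))) (n : ℕ) :
    s.star (span (Set.range fun i => a i ^ n) : FractionalIdeal R⁰ L) =
      s.star ↑(span (Set.range a) ^ n) := by
  set A := span (Set.range a)
  have : Nonempty ι := by
    by_contra h
    exact ha (by simp [A, not_nonempty_iff.mp h])
  set M := Fintype.card ι * n
  have hle : span (Set.range fun i => a i ^ n) ≤ A ^ n := by
    rw [span_le]
    rintro _ ⟨i, rfl⟩
    exact pow_mem_pow (subset_span (Set.mem_range_self i)) n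
  have heq : span (Set.range fun i => a i ^ n) * A ^ M = A ^ n * A ^ M := by
    refine le_antisymm (mul_mono_left hle) ?_
    simpa [← pow_add] using span_range_pow_le_mul a (N := n + M) le_add_self
  refine s.star_eq_of_star_mul_pow_eq (coeIdeal_ne_zero.mpr (span_range_pow_ne_bot ha n))
    (coeIdeal_ne_zero.mpr (pow_ne_zero n ha)) (coeIdeal_ne_zero.mpr ha) hinv M ?_
  rw [← coeIdeal_pow, ← coeIdeal_mul, ← coeIdeal_mul, heq]

theorem exists_isStarInvertibleI_span_pow_sup {P : Ideal R} {k l : ℕ}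
    {a : Fin k → R} {b : Fin l → R} (ha : s.IsAlmostSuperHomogeneous P (span (Set.range a)))
    (hb : span (Set.range b) ≤ P) :
    ∃ n, 0 < n ∧ s.IsStarInvertibleI
      (span (Set.range fun i => a i ^ n) ⊔ span (Set.range fun i => b i ^ n)) := by
  obtain ⟨-, ⟨ha0, -, -, haP, -⟩, hash⟩ := ha
  have hspan (m : ℕ) : span (Set.range fun i => Fin.append a b i ^ m) =
      span (Set.range fun i => a i ^ m) ⊔ span (Set.range fun i => b i ^ m) := by
    have h := congrArg (Set.image (· ^ m)) (Fin.range_append a b)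
    rw [Set.image_union, ← Set.range_comp, ← Set.range_comp, ← Set.range_comp] at h
    rw [← span_union]
    exact congrArg span h
  have hab : span (Set.range (Fin.append a b)) = span (Set.range a) ⊔ span (Set.range b) := by
    simpa only [pow_one] using hspan 1
  obtain ⟨n, hn, hinv⟩ := hash (k + l) (Fin.append a b)
    (fun i => sup_le haP hb (hab ▸ subset_span ⟨i, rfl⟩))
    ⟨1, one_pos, by
      rw [pow_one, hab]
      exact ((coeIdeal_le_coeIdeal L).mpr le_sup_left).trans
        (s.le_star _ (coeIdeal_ne_zero.mpr (ne_bot_of_le_ne_bot ha0 le_sup_left)))⟩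
  exact ⟨n, hn, hspan n ▸ hinv⟩

end Domain

end StarOperation

end

theorem stmt3 (s : StarOperation D K) (P A B : Ideal D)
    (hA : s.IsAlmostSuperHomogeneous P A) (hB : s.IsAlmostSuperHomogeneous P B) :
    ∃ n : ℕ, 0 < n ∧
      (((B ^ n : Ideal D) : FractionalIdeal (nonZeroDivisors D) K) ≤ s.star ((A ^ n : Ideal D) : FractionalIdeal (nonZeroDivisors D) K) ∨
        ((A ^ n : Ideal D) : FractionalIdeal (nonZeroDivisors D) K) ≤ s.star ((B ^ n : Ideal D) : FractionalIdeal (nonZeroDivisors D) K)) := by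
  obtain ⟨k, a, rfl : Ideal.span _ = A⟩ :=
    Submodule.fg_iff_exists_fin_generating_family.mp hA.2.1.2.1
  obtain ⟨l, b, rfl : Ideal.span _ = B⟩ :=
    Submodule.fg_iff_exists_fin_generating_family.mp hB.2.1.2.1
  obtain ⟨n, hn, hinv⟩ := s.exists_isStarInvertibleI_span_pow_sup hA hB.2.1.2.2.2.1
  obtain ⟨hAinv, ⟨hA0, -, hP, -, hAP⟩, -⟩ := hA
  obtain ⟨hBinv, ⟨hB0, -, -, -, hBP⟩, -⟩ := hB
  have hcomp := s.star_le_star_or_star_le_star hP (Ideal.span_range_pow_ne_bot hA0 n)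
    (Ideal.span_range_pow_ne_bot hB0 n) (s.forall_isMaxStarIdeal_span_range_pow_le hAP n)
    (s.forall_isMaxStarIdeal_span_range_pow_le hBP n) hinv
  rw [s.star_span_range_pow hA0 hAinv, s.star_span_range_pow hB0 hBinv] at hcomp
  have hAn := coeIdeal_ne_zero (K := K) |>.mpr (pow_ne_zero n hA0)
  have hBn := coeIdeal_ne_zero (K := K) |>.mpr (pow_ne_zero n hB0)
  exact ⟨n, hn, hcomp.imp (s.le_star_iff_star_le_star hAn hBn).mpr
    (s.le_star_iff_star_le_star hBn hAn).mpr⟩
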